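/- arXiv:0803.2423 — 2 statements merged into one kernel-verified Lean document; each statement's English description precedes it below -/
import Mathlib

section
/- Let (A,B) be a table algebra, C ⊆ B a closed subset, and b_1 = 1_A, …, b_k a complete set of representatives of the C-double cosets of B. Then the ℂ-span of b_1/C, …, b_k/C is a unital subalgebra of A with unit e = |C⁺|⁻¹C⁺, and the pair (span, {b_1/C, …, b_k/C}) is again a table algebra, whose structure constants are γ_{ijk} = |C⁺|⁻¹ Σ_{r∈Cb_iC, s∈Cb_jC} λ_{rst}, where t ∈ Cb_kC is arbitrary (the value being independent of the choice of t). -/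
open Matrix
open scoped BigOperators

/-- `(A, B)` is a (possibly noncommutative) C-algebra with degree map `deg` and
structure constants `lam` :
(I) `1 ∈ B`, `B` is a basis, and the structure constants are real;
(II) `star` is a conjugate-linear involutory anti-automorphism with `B* = B`
(encoded by the `StarRing`/`StarModule` instances and `star_mem`);
(III) `λ_{a b 1} = δ_{a, b*} |a|` with `|a| > 0`;
(IV) `deg` is a `ℂ`-algebra homomorphism with `deg b = |b|` and `deg (x*) = conj (deg x)`. -/
structure IsCAlgebra (A : Type*) [Ring A] [Algebra ℂ A] [StarRing A] [StarModule ℂ A]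
    (B : Finset A) (deg : A →ₐ[ℂ] ℂ) (lam : A → A → A → ℝ) : Prop where
  indep : LinearIndependent ℂ (fun x : ↥(B : Set A) => (x : A))
  span_top : Submodule.span ℂ (B : Set A) = ⊤
  one_mem : (1 : A) ∈ B
  star_mem : ∀ b ∈ B, star b ∈ B
  struct : ∀ a ∈ B, ∀ b ∈ B, a * b = ∑ c ∈ B, (lam a b c : ℂ) • c
  lam_one_eq : ∀ a ∈ B, (lam a (star a) 1 : ℂ) = deg a
  lam_one_ne : ∀ a ∈ B, ∀ b ∈ B, a ≠ star b → lam a b 1 = 0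
  deg_pos : ∀ a ∈ B, 0 < lam a (star a) 1
  deg_star : ∀ x : A, deg (star x) = (starRingEnd ℂ) (deg x)

/-- A table algebra is a C-algebra with nonnegative structure constants. -/
structure IsTableAlgebra (A : Type*) [Ring A] [Algebra ℂ A] [StarRing A] [StarModule ℂ A]
    (B : Finset A) (deg : A →ₐ[ℂ] ℂ) (lam : A → A → A → ℝ)
    extends IsCAlgebra A B deg lam : Prop where
  lam_nonneg : ∀ a ∈ B, ∀ b ∈ B, ∀ c ∈ B, 0 ≤ lam a b c

/-- The standard feasible trace: `ζ(1) = |B⁺|` and `ζ(b) = 0` for `1 ≠ b ∈ B`. -/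
def IsStdTrace {A : Type*} [Ring A] [Algebra ℂ A] (B : Finset A) (deg : A →ₐ[ℂ] ℂ)
    (ζ : A →ₗ[ℂ] ℂ) : Prop :=
  ζ 1 = (∑ b ∈ B, deg b) ∧ ∀ b ∈ B, b ≠ 1 → ζ b = 0

/-- `χ` is an irreducible character of `A`: the trace of a surjective (hence irreducible)
matrix representation of positive degree. -/
def IsIrrChar (A : Type*) [Ring A] [Algebra ℂ A] (χ : A → ℂ) : Prop :=
  ∃ (n : ℕ) (D : A →ₐ[ℂ] Matrix (Fin n) (Fin n) ℂ),
    0 < n ∧ Function.Surjective ⇑D ∧ ∀ a : A, χ a = (D a).trace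

/-- `φ` agrees on the corner algebra `H = eAe = {x | e*x*e = x}` with an irreducible
character of `H`: there is an irreducible (i.e. surjective) unital matrix representation
of `H` of positive degree whose trace is `φ` on `H`. -/
def IsIrrCharOn {A : Type*} [Ring A] [Algebra ℂ A] (e : A) (φ : A → ℂ) : Prop :=
  ∃ (n : ℕ) (D : A → Matrix (Fin n) (Fin n) ℂ),
    0 < n ∧ D e = 1 ∧
    (∀ x y : A, e * x * e = x → e * y * e = y → D (x + y) = D x + D y) ∧
    (∀ (c : ℂ) (x : A), e * x * e = x → D (c • x) = c • D x) ∧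
    (∀ x y : A, e * x * e = x → e * y * e = y → D (x * y) = D x * D y) ∧
    (∀ M : Matrix (Fin n) (Fin n) ℂ, ∃ x : A, e * x * e = x ∧ D x = M) ∧
    (∀ x : A, e * x * e = x → φ x = (D x).trace)

/-- `C` is a closed subset of the basis `B` : `C` is nonempty and every basis element
occurring with nonzero coefficient in `c* ⬝ d` (for `c, d ∈ C`) lies in `C`.
Here `coord b x` is the coefficient of the basis element `b` in `x`. -/
def IsClosedSubset {A : Type*} [Ring A] [Algebra ℂ A] [StarRing A] [StarModule ℂ A]
    (B C : Finset A) (coord : A → A → ℂ) : Prop :=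
  C.Nonempty ∧ C ⊆ B ∧ ∀ c ∈ C, ∀ d ∈ C, ∀ b ∈ B, coord b (star c * d) ≠ 0 → b ∈ C

open scoped Classical in
/-- The double coset `CbC` : basis elements occurring with nonzero coefficient
in `C⁺ * b * C⁺`. -/
noncomputable def DCoset {A : Type*} [Ring A] [Algebra ℂ A]
    (B : Finset A) (coord : A → A → ℂ) (C : Finset A) (b : A) : Finset A :=
  B.filter fun y => coord y ((∑ c ∈ C, c) * b * (∑ c ∈ C, c)) ≠ 0

/-- The quotient basis element `b/C = |C⁺|⁻¹ (CbC)⁺`. -/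
noncomputable def quo {A : Type*} [Ring A] [Algebra ℂ A]
    (B : Finset A) (deg : A →ₐ[ℂ] ℂ) (coord : A → A → ℂ) (C : Finset A) (b : A) : A :=
  (∑ c ∈ C, deg c)⁻¹ • ∑ x ∈ DCoset B coord C b, x

/-!
Write `C⁺ = ∑ c ∈ C, c`, `|b| = λ_{b b* 1}` and `τ = coord 1`. As `τ` is a trace with
`τ x* = conj (τ x)`, the weights `w b y = (coefficient of y in C⁺ b C⁺) * |y|` are symmetric; they
are nonnegative because the structure constants are, and the degree map applied to `C⁺ b C⁺` gives
`∑ y, w b y = |C⁺|² |b|`. Closedness of `C` gives `C⁺ C⁺ = |C⁺| C⁺`. Hence if `C⁺ X C⁺ = |C⁺|² X`,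
each coefficient `f s` of `X` is the `w s`-weighted mean of the coefficients of `X`, so the Dirichlet
form `∑ s t, w s t (f s - f t)²` vanishes and `f` is constant on double cosets.

For `X = C⁺ b C⁺` this shows that the double cosets partition `B` and that `C⁺ b C⁺` is a positive
multiple of `(CbC)⁺`; so `e` is a two-sided unit for each `b/C`, and `star (b/C)` is a multiple of
`b*/C`. For `X = (CiC)⁺ (CjC)⁺` it shows that `∑ r ∈ CiC, ∑ s ∈ CjC, λ_{rst}` depends only on the
double coset of `t`, which gives the structure constants.
-/

open scoped ComplexConjugate

theorem Finset.eq_of_weighted_harmonic {α : Type*} (s : Finset α) (w : α → α → ℝ)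
    (f : α → ℝ) (hw : ∀ x ∈ s, ∀ y ∈ s, 0 ≤ w x y) (hsymm : ∀ x ∈ s, ∀ y ∈ s, w x y = w y x)
    (hf : ∀ x ∈ s, ∑ y ∈ s, w x y * f y = (∑ y ∈ s, w x y) * f x)
    {x y : α} (hx : x ∈ s) (hy : y ∈ s) (hxy : w x y ≠ 0) : f x = f y := by
  set g : α → α → ℝ := fun x y => w x y * (f x - f y) * f x
  have hg : ∑ x ∈ s, ∑ y ∈ s, g x y = 0 := by
    refine Finset.sum_eq_zero fun x hx => ?_
    simp only [g, mul_sub, sub_mul, Finset.sum_sub_distrib, ← Finset.sum_mul, hf x hx]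
    ring
  have hdirichlet : ∑ x ∈ s, ∑ y ∈ s, w x y * (f x - f y) ^ 2 = 0 := by
    calc ∑ x ∈ s, ∑ y ∈ s, w x y * (f x - f y) ^ 2
        = ∑ x ∈ s, ∑ y ∈ s, (g x y + g y x) := by
          refine Finset.sum_congr rfl fun x hx => Finset.sum_congr rfl fun y hy => ?_
          simp only [g, hsymm y hy x hx]
          ring
      _ = 0 := by
          rw [Finset.sum_congr rfl fun x _ => Finset.sum_add_distrib, Finset.sum_add_distrib,
            Finset.sum_comm (f := fun x y => g y x), hg, add_zero]
  have hrow := (Finset.sum_eq_zero_iff_of_nonneg fun x hx => Finset.sum_nonneg fun y hy =>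
    mul_nonneg (hw x hx y hy) (sq_nonneg _)).mp hdirichlet x hx
  have hterm := (Finset.sum_eq_zero_iff_of_nonneg fun y hy =>
    mul_nonneg (hw x hx y hy) (sq_nonneg _)).mp hrow y hy
  simpa [hxy, sub_eq_zero] using hterm

theorem Finset.sum_eq_sum_sum_of_existsUnique {ι α M : Type*} [AddCommMonoid M]
    [DecidableEq α] {s : Finset α} {T : Finset ι} {D : ι → Finset α} (hD : ∀ t ∈ T, D t ⊆ s)
    (h : ∀ b ∈ s, ∃! t, t ∈ T ∧ b ∈ D t) (g : α → M) :
    ∑ b ∈ s, g b = ∑ t ∈ T, ∑ b ∈ D t, g b := by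
  have hs : s = T.biUnion D := by
    ext b
    refine ⟨fun hb => ?_, fun hb => ?_⟩
    · obtain ⟨t, ⟨ht, hbt⟩, -⟩ := h b hb
      exact Finset.mem_biUnion.mpr ⟨t, ht, hbt⟩
    · obtain ⟨t, ht, hbt⟩ := Finset.mem_biUnion.mp hb
      exact hD t ht hbt
  rw [hs, Finset.sum_biUnion fun t₁ ht₁ t₂ ht₂ hne =>
    Finset.disjoint_left.mpr fun b hb₁ hb₂ => ?_]
  obtain ⟨t, -, huniq⟩ := h b (hD t₁ ht₁ hb₁)
  exact hne ((huniq t₁ ⟨ht₁, hb₁⟩).trans (huniq t₂ ⟨ht₂, hb₂⟩).symm)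

theorem inv_smul_mul_inv_smul_of_mul_eq {K A : Type*} [Field K] [Ring A] [Algebra K A]
    {N : K} (hN : N ≠ 0) {x y z : A} (h : x * y = N • z) :
    (N⁻¹ • x) * (N⁻¹ • y) = N⁻¹ • z := by
  rw [smul_mul_smul_comm, h, smul_smul, mul_assoc, inv_mul_cancel₀ hN, mul_one]

theorem Submodule.mul_mem_span_of_mul_mem {R A : Type*} [CommSemiring R] [Semiring A]
    [Algebra R A] {s : Set A} (h : ∀ x ∈ s, ∀ y ∈ s, x * y ∈ span R s) {x y : A}
    (hx : x ∈ span R s) (hy : y ∈ span R s) : x * y ∈ span R s := by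
  have hmul : span R s * span R s ≤ span R s := by
    rw [span_mul_span, span_le]
    rintro _ ⟨x, hx, y, hy, rfl⟩
    exact h x hx y hy
  exact hmul (mul_mem_mul hx hy)

theorem Submodule.mul_eq_self_of_mem_span {R A : Type*} [CommSemiring R] [Semiring A]
    [Algebra R A] {s : Set A} {e : A} (h : ∀ x ∈ s, e * x = x ∧ x * e = x) {x : A}
    (hx : x ∈ span R s) : e * x = x ∧ x * e = x :=
  ⟨LinearMap.eqOn_span' (f := LinearMap.mulLeft R e) (g := LinearMap.id)
      (fun x hx => (h x hx).1) hx,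
    LinearMap.eqOn_span' (f := LinearMap.mulRight R e) (g := LinearMap.id)
      (fun x hx => (h x hx).2) hx⟩

theorem eq_of_coord_eq {A : Type*} [AddCommMonoid A] [Module ℂ A] {B : Finset A}
    {coord : A → A → ℂ} (hcoord : ∀ x : A, x = ∑ b ∈ B, coord b x • b) {x y : A}
    (h : ∀ b ∈ B, coord b x = coord b y) : x = y := by
  rw [hcoord x, hcoord y]
  exact Finset.sum_congr rfl fun b hb => by rw [h b hb]

theorem AlgHom.eq_sum_coord_mul {A : Type*} [Ring A] [Algebra ℂ A] {B : Finset A}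
    {coord : A → A → ℂ} (hcoord : ∀ x : A, x = ∑ b ∈ B, coord b x • b) (deg : A →ₐ[ℂ] ℂ)
    (x : A) : deg x = ∑ b ∈ B, coord b x * deg b := by
  conv_lhs => rw [hcoord x]
  simp

def sandwichCoeff {A : Type*} (B C : Finset A) (lam : A → A → A → ℝ) (b y : A) : ℝ :=
  ∑ c ∈ C, ∑ d ∈ C, ∑ u ∈ B, lam c b u * lam u d y

theorem DCoset_subset {A : Type*} [Ring A] [Algebra ℂ A] (B : Finset A) (coord : A → A → ℂ)
    (C : Finset A) (b : A) : DCoset B coord C b ⊆ B :=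
  Finset.filter_subset _ _

section

open scoped Classical

variable {A : Type*} [Ring A] [Algebra ℂ A] [StarRing A] [StarModule ℂ A]
  {B C : Finset A} {deg : A →ₐ[ℂ] ℂ} {lam : A → A → A → ℝ} {coord : A → A → ℂ}

namespace IsCAlgebra

noncomputable def basis (hA : IsCAlgebra A B deg lam) : Module.Basis (B : Set A) ℂ A :=
  Module.Basis.mk hA.indep (by simp [hA.span_top])

theorem coord_eq_basis_coord (hA : IsCAlgebra A B deg lam)
    (hcoord : ∀ x : A, x = ∑ b ∈ B, coord b x • b) {b : A} (hb : b ∈ B) (x : A) :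
    coord b x = hA.basis.coord ⟨b, hb⟩ x := by
  have hx : x = ∑ i : (B : Set A), coord i x • hA.basis i := by
    simpa [basis, Module.Basis.mk_apply] using (hcoord x).trans (Finset.sum_coe_sort B _).symm
  rw [Module.Basis.coord_apply, hx, Module.Basis.repr_sum_self, ← hx]

theorem coord_sum_smul (hA : IsCAlgebra A B deg lam)
    (hcoord : ∀ x : A, x = ∑ b ∈ B, coord b x • b) {b : A} (hb : b ∈ B)
    {ι : Type*} (s : Finset ι) (r : ι → ℂ) (x : ι → A) :
    coord b (∑ i ∈ s, r i • x i) = ∑ i ∈ s, r i * coord b (x i) := by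
  simp [hA.coord_eq_basis_coord hcoord hb]

theorem coord_sum (hA : IsCAlgebra A B deg lam)
    (hcoord : ∀ x : A, x = ∑ b ∈ B, coord b x • b) {b : A} (hb : b ∈ B)
    {ι : Type*} (s : Finset ι) (x : ι → A) :
    coord b (∑ i ∈ s, x i) = ∑ i ∈ s, coord b (x i) := by
  simp [hA.coord_eq_basis_coord hcoord hb]

theorem coord_smul (hA : IsCAlgebra A B deg lam)
    (hcoord : ∀ x : A, x = ∑ b ∈ B, coord b x • b) {b : A} (hb : b ∈ B) (r : ℂ) (x : A) :
    coord b (r • x) = r * coord b x := by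
  simp [hA.coord_eq_basis_coord hcoord hb]

theorem coord_of_mem (hA : IsCAlgebra A B deg lam)
    (hcoord : ∀ x : A, x = ∑ b ∈ B, coord b x • b) {a b : A} (ha : a ∈ B) (hb : b ∈ B) :
    coord b a = if b = a then 1 else 0 := by
  have h := hA.coord_eq_basis_coord hcoord hb (hA.basis ⟨a, ha⟩)
  rw [Module.Basis.coord_apply, Module.Basis.repr_self,
    show hA.basis ⟨a, ha⟩ = a from Module.Basis.mk_apply _ _ _] at h
  simp [h, Finsupp.single_apply, eq_comm]

theorem coord_sum_of_subset (hA : IsCAlgebra A B deg lam)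
    (hcoord : ∀ x : A, x = ∑ b ∈ B, coord b x • b) {D : Finset A} (hD : D ⊆ B)
    {b : A} (hb : b ∈ B) : coord b (∑ x ∈ D, x) = if b ∈ D then 1 else 0 := by
  rw [hA.coord_sum hcoord hb, Finset.sum_congr rfl fun x hx => hA.coord_of_mem hcoord (hD hx) hb,
    Finset.sum_ite_eq]

theorem coord_mul (hA : IsCAlgebra A B deg lam)
    (hcoord : ∀ x : A, x = ∑ b ∈ B, coord b x • b) {a b c : A}
    (ha : a ∈ B) (hb : b ∈ B) (hc : c ∈ B) : coord c (a * b) = lam a b c := by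
  rw [hA.struct a ha b hb, hA.coord_sum_smul hcoord hc,
    Finset.sum_congr rfl fun d hd => by rw [hA.coord_of_mem hcoord hd hc]]
  simp [hc]

theorem coord_mul_basis (hA : IsCAlgebra A B deg lam)
    (hcoord : ∀ x : A, x = ∑ b ∈ B, coord b x • b) {b s : A} (hb : b ∈ B) (hs : s ∈ B)
    (x : A) : coord s (x * b) = ∑ u ∈ B, coord u x * lam u b s := by
  conv_lhs => rw [hcoord x]
  simp only [Finset.sum_mul, smul_mul_assoc]
  rw [hA.coord_sum_smul hcoord hs]
  exact Finset.sum_congr rfl fun u hu => by rw [hA.coord_mul hcoord hu hb hs]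

theorem deg_eq (hA : IsCAlgebra A B deg lam) {b : A} (hb : b ∈ B) :
    deg b = lam b (star b) 1 :=
  (hA.lam_one_eq b hb).symm

theorem lam_star_one_eq (hA : IsCAlgebra A B deg lam) {b : A} (hb : b ∈ B) :
    lam (star b) b 1 = lam b (star b) 1 := by
  have h := hA.deg_eq (hA.star_mem b hb)
  rw [star_star, hA.deg_star, hA.deg_eq hb, Complex.conj_ofReal] at h
  exact_mod_cast h.symm

theorem sum_star (hA : IsCAlgebra A B deg lam) {M : Type*} [AddCommMonoid M] (f : A → M) :
    ∑ b ∈ B, f (star b) = ∑ b ∈ B, f b :=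
  Finset.sum_nbij' star star hA.star_mem hA.star_mem (fun b _ => star_star b)
    (fun b _ => star_star b) fun _ _ => rfl

theorem coord_one_mul_star (hA : IsCAlgebra A B deg lam)
    (hcoord : ∀ x : A, x = ∑ b ∈ B, coord b x • b) {b : A} (hb : b ∈ B) (x : A) :
    coord 1 (x * star b) = coord b x * lam b (star b) 1 := by
  rw [hA.coord_mul_basis hcoord (hA.star_mem b hb) hA.one_mem]
  refine Finset.sum_eq_single b (fun u hu hub => ?_) (absurd hb)
  rw [hA.lam_one_ne u hu (star b) (hA.star_mem b hb) (by rwa [star_star]), Complex.ofReal_zero,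
    mul_zero]

theorem coord_one_mul_comm (hA : IsCAlgebra A B deg lam)
    (hcoord : ∀ x : A, x = ∑ b ∈ B, coord b x • b) (x y : A) :
    coord 1 (x * y) = coord 1 (y * x) := by
  have expand : ∀ x y : A,
      coord 1 (x * y) = ∑ b ∈ B, coord (star b) y * (coord b x * lam b (star b) 1) := by
    intro x y
    conv_lhs => rw [hcoord y, ← hA.sum_star]
    simp only [Finset.mul_sum, mul_smul_comm]
    rw [hA.coord_sum_smul hcoord hA.one_mem]
    exact Finset.sum_congr rfl fun b hb => by rw [hA.coord_one_mul_star hcoord hb]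
  rw [expand, expand, ← hA.sum_star (fun b => coord (star b) x * _)]
  refine Finset.sum_congr rfl fun b hb => ?_
  rw [star_star, hA.lam_star_one_eq hb]
  ring

theorem coord_one_star (hA : IsCAlgebra A B deg lam)
    (hcoord : ∀ x : A, x = ∑ b ∈ B, coord b x • b) (x : A) :
    coord 1 (star x) = conj (coord 1 x) := by
  conv_lhs => rw [hcoord x]
  simp only [star_sum, star_smul]
  rw [hA.coord_sum_smul hcoord hA.one_mem]
  rw [Finset.sum_congr rfl fun b hb => by
    rw [hA.coord_of_mem hcoord (hA.star_mem b hb) hA.one_mem]]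
  simp only [eq_comm (a := (1 : A)), star_injective.eq_iff' (star_one A)]
  simp [hA.one_mem]

theorem lam_mul_deg_eq (hA : IsCAlgebra A B deg lam)
    (hcoord : ∀ x : A, x = ∑ b ∈ B, coord b x • b) {a c s : A}
    (ha : a ∈ B) (hc : c ∈ B) (hs : s ∈ B) :
    lam c a s * lam s (star s) 1 = lam a (star s) (star c) * lam c (star c) 1 := by
  have h := hA.coord_one_mul_comm hcoord c (a * star s)
  rw [← mul_assoc, hA.coord_one_mul_star hcoord hs, hA.coord_mul hcoord hc ha hs,
    ← star_star c, hA.coord_one_mul_star hcoord (hA.star_mem c hc),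
    hA.coord_mul hcoord ha (hA.star_mem s hs) (hA.star_mem c hc), star_star,
    hA.lam_star_one_eq hc] at h
  exact_mod_cast h

theorem sum_lam_left (hA : IsCAlgebra A B deg lam)
    (hcoord : ∀ x : A, x = ∑ b ∈ B, coord b x • b) {a s : A} (ha : a ∈ B) (hs : s ∈ B) :
    ∑ c ∈ B, lam c a s = lam a (star a) 1 := by
  have hs0 : (lam s (star s) 1 : ℂ) ≠ 0 := by exact_mod_cast (hA.deg_pos s hs).ne'
  have key :
      (∑ c ∈ B, (lam c a s : ℂ)) * lam s (star s) 1 = lam a (star a) 1 * lam s (star s) 1 :=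
    calc (∑ c ∈ B, (lam c a s : ℂ)) * lam s (star s) 1
        = ∑ c ∈ B, (lam a (star s) (star c) : ℂ) * lam c (star c) 1 := by
          rw [Finset.sum_mul]
          exact Finset.sum_congr rfl fun c hc => by
            exact_mod_cast hA.lam_mul_deg_eq hcoord ha hc hs
      _ = ∑ c ∈ B, coord c (a * star s) * deg c := by
          rw [← hA.sum_star fun c => coord c (a * star s) * deg c]
          refine Finset.sum_congr rfl fun c hc => ?_
          rw [hA.coord_mul hcoord ha (hA.star_mem s hs) (hA.star_mem c hc), hA.deg_star,
            hA.deg_eq hc, Complex.conj_ofReal]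
      _ = lam a (star a) 1 * lam s (star s) 1 := by
          rw [← AlgHom.eq_sum_coord_mul hcoord, map_mul, hA.deg_star, hA.deg_eq ha, hA.deg_eq hs,
            Complex.conj_ofReal]
  exact_mod_cast mul_right_cancel₀ hs0 key

end IsCAlgebra

namespace IsClosedSubset

theorem one_mem (hC : IsClosedSubset B C coord) (hA : IsCAlgebra A B deg lam)
    (hcoord : ∀ x : A, x = ∑ b ∈ B, coord b x • b) : (1 : A) ∈ C := by
  obtain ⟨c, hc⟩ := hC.1
  have hcB := hC.2.1 hc
  refine hC.2.2 c hc c hc 1 hA.one_mem ?_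
  rw [hA.coord_mul hcoord (hA.star_mem c hcB) hcB hA.one_mem, hA.lam_star_one_eq hcB]
  exact_mod_cast (hA.deg_pos c hcB).ne'

theorem star_mem (hC : IsClosedSubset B C coord) (hA : IsCAlgebra A B deg lam)
    (hcoord : ∀ x : A, x = ∑ b ∈ B, coord b x • b) {c : A} (hc : c ∈ C) : star c ∈ C := by
  have hcB := hA.star_mem c (hC.2.1 hc)
  refine hC.2.2 c hc 1 (hC.one_mem hA hcoord) (star c) hcB ?_
  simp [hA.coord_of_mem hcoord hcB hcB]

theorem mem_of_coord_mul_ne_zero (hC : IsClosedSubset B C coord)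
    (hA : IsCAlgebra A B deg lam) (hcoord : ∀ x : A, x = ∑ b ∈ B, coord b x • b) {c d b : A}
    (hc : c ∈ C) (hd : d ∈ C) (hb : b ∈ B) (h : coord b (c * d) ≠ 0) : b ∈ C :=
  hC.2.2 (star c) (hC.star_mem hA hcoord hc) d hd b hb (by rwa [star_star])

theorem lam_eq_zero_of_notMem (hC : IsClosedSubset B C coord) (hA : IsCAlgebra A B deg lam)
    (hcoord : ∀ x : A, x = ∑ b ∈ B, coord b x • b) {a c s : A} (ha : a ∈ C) (hs : s ∈ C)
    (hc : c ∈ B) (hcC : c ∉ C) : lam c a s = 0 := by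
  have hsB := hC.2.1 hs
  have h := hA.lam_mul_deg_eq hcoord (hC.2.1 ha) hc hsB
  have hzero : lam a (star s) (star c) = 0 := by
    by_contra hne
    refine hcC (star_star c ▸ hC.star_mem hA hcoord (hC.mem_of_coord_mul_ne_zero hA hcoord ha
      (hC.star_mem hA hcoord hs) (hA.star_mem c hc) ?_))
    rw [hA.coord_mul hcoord (hC.2.1 ha) (hA.star_mem s hsB) (hA.star_mem c hc)]
    exact_mod_cast hne
  rw [hzero, zero_mul] at h
  exact (mul_eq_zero.mp h).resolve_right (hA.deg_pos s hsB).ne'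

theorem sum_mul_of_mem (hC : IsClosedSubset B C coord) (hA : IsCAlgebra A B deg lam)
    (hcoord : ∀ x : A, x = ∑ b ∈ B, coord b x • b) {a : A} (ha : a ∈ C) :
    (∑ c ∈ C, c) * a = deg a • ∑ c ∈ C, c := by
  have haB := hC.2.1 ha
  refine eq_of_coord_eq hcoord fun s hs => ?_
  rw [Finset.sum_mul, hA.coord_sum hcoord hs, hA.coord_smul hcoord hs,
    hA.coord_sum_of_subset hcoord hC.2.1 hs,
    Finset.sum_congr rfl fun c hc => hA.coord_mul hcoord (hC.2.1 hc) haB hs]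
  split_ifs with hsC
  · rw [mul_one, hA.deg_eq haB, ← hA.sum_lam_left hcoord haB hs, Complex.ofReal_sum]
    refine (Finset.sum_subset (f := fun c => (lam c a s : ℂ)) hC.2.1 fun c hc hcC => ?_)
    rw [hC.lam_eq_zero_of_notMem hA hcoord ha hsC hc hcC, Complex.ofReal_zero]
  · refine (Finset.sum_eq_zero fun c hc => ?_).trans (mul_zero _).symm
    by_contra hne
    exact hsC (hC.mem_of_coord_mul_ne_zero hA hcoord hc ha hs
      (by rwa [hA.coord_mul hcoord (hC.2.1 hc) haB hs]))

theorem sum_mul_sum (hC : IsClosedSubset B C coord) (hA : IsCAlgebra A B deg lam)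
    (hcoord : ∀ x : A, x = ∑ b ∈ B, coord b x • b) :
    (∑ c ∈ C, c) * (∑ c ∈ C, c) = (∑ c ∈ C, deg c) • ∑ c ∈ C, c := by
  rw [Finset.mul_sum, Finset.sum_congr rfl fun a ha => hC.sum_mul_of_mem hA hcoord ha,
    Finset.sum_smul]

theorem sum_mul_mul_sum_sandwich (hC : IsClosedSubset B C coord) (hA : IsCAlgebra A B deg lam)
    (hcoord : ∀ x : A, x = ∑ b ∈ B, coord b x • b) (x : A) :
    (∑ c ∈ C, c) * ((∑ c ∈ C, c) * x * ∑ c ∈ C, c) * (∑ c ∈ C, c) =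
      (∑ c ∈ C, deg c) ^ 2 • ((∑ c ∈ C, c) * x * ∑ c ∈ C, c) := by
  rw [show (∑ c ∈ C, c) * ((∑ c ∈ C, c) * x * ∑ c ∈ C, c) * (∑ c ∈ C, c) =
      ((∑ c ∈ C, c) * ∑ c ∈ C, c) * x * ((∑ c ∈ C, c) * ∑ c ∈ C, c) by simp only [mul_assoc],
    hC.sum_mul_sum hA hcoord, smul_mul_assoc, smul_mul_assoc, mul_smul_comm, smul_smul, sq]

theorem star_sum (hC : IsClosedSubset B C coord) (hA : IsCAlgebra A B deg lam)
    (hcoord : ∀ x : A, x = ∑ b ∈ B, coord b x • b) : star (∑ c ∈ C, c) = ∑ c ∈ C, c := by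
  rw [_root_.star_sum]
  exact Finset.sum_nbij' star star (fun c hc => hC.star_mem hA hcoord hc)
    (fun c hc => hC.star_mem hA hcoord hc) (fun c _ => star_star c) (fun c _ => star_star c)
    fun _ _ => rfl

theorem sum_deg_eq (hC : IsClosedSubset B C coord) (hA : IsCAlgebra A B deg lam) :
    ∑ c ∈ C, deg c = ((∑ c ∈ C, lam c (star c) 1 : ℝ) : ℂ) := by
  push_cast
  exact Finset.sum_congr rfl fun c hc => hA.deg_eq (hC.2.1 hc)

theorem sum_lam_pos (hC : IsClosedSubset B C coord) (hA : IsCAlgebra A B deg lam) :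
    0 < ∑ c ∈ C, lam c (star c) 1 :=
  Finset.sum_pos (fun c hc => hA.deg_pos c (hC.2.1 hc)) hC.1

theorem sum_deg_ne_zero (hC : IsClosedSubset B C coord) (hA : IsCAlgebra A B deg lam) :
    ∑ c ∈ C, deg c ≠ 0 := by
  rw [hC.sum_deg_eq hA]
  exact_mod_cast (hC.sum_lam_pos hA).ne'

end IsClosedSubset

namespace IsCAlgebra

theorem coord_sum_mul_mul_sum (hA : IsCAlgebra A B deg lam)
    (hcoord : ∀ x : A, x = ∑ b ∈ B, coord b x • b) (hCB : C ⊆ B) {b y : A}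
    (hb : b ∈ B) (hy : y ∈ B) :
    coord y ((∑ c ∈ C, c) * b * ∑ c ∈ C, c) = sandwichCoeff B C lam b y := by
  rw [Finset.sum_mul, Finset.sum_mul]
  simp only [Finset.mul_sum, hA.coord_sum hcoord hy, sandwichCoeff, Complex.ofReal_sum,
    Complex.ofReal_mul]
  refine Finset.sum_congr rfl fun c hc => Finset.sum_congr rfl fun d hd => ?_
  rw [hA.coord_mul_basis hcoord (hCB hd) hy]
  exact Finset.sum_congr rfl fun u hu => by rw [hA.coord_mul hcoord (hCB hc) hb hu]

theorem coord_sum_mul_mul_sum_eq_sum_coord_mul (hA : IsCAlgebra A B deg lam)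
    (hcoord : ∀ x : A, x = ∑ b ∈ B, coord b x • b) (hCB : C ⊆ B) {s : A} (hs : s ∈ B) (X : A) :
    coord s ((∑ c ∈ C, c) * X * ∑ c ∈ C, c) =
      ∑ t ∈ B, coord t X * sandwichCoeff B C lam t s := by
  conv_lhs => rw [hcoord X]
  simp only [Finset.mul_sum (s := B), Finset.sum_mul (s := B), mul_smul_comm, smul_mul_assoc]
  rw [hA.coord_sum_smul hcoord hs]
  exact Finset.sum_congr rfl fun t ht => by rw [hA.coord_sum_mul_mul_sum hcoord hCB ht hs]

theorem mem_DCoset_iff (hA : IsCAlgebra A B deg lam)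
    (hcoord : ∀ x : A, x = ∑ b ∈ B, coord b x • b) (hCB : C ⊆ B) {b y : A} (hb : b ∈ B) :
    y ∈ DCoset B coord C b ↔ y ∈ B ∧ sandwichCoeff B C lam b y ≠ 0 := by
  unfold DCoset
  rw [Finset.mem_filter]
  refine and_congr_right fun hy => ?_
  rw [hA.coord_sum_mul_mul_sum hcoord hCB hb hy, Complex.ofReal_ne_zero]

theorem sandwichCoeff_mul_deg_comm (hA : IsCAlgebra A B deg lam)
    (hcoord : ∀ x : A, x = ∑ b ∈ B, coord b x • b) (hC : IsClosedSubset B C coord) {b y : A}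
    (hb : b ∈ B) (hy : y ∈ B) :
    sandwichCoeff B C lam b y * lam y (star y) 1 =
      sandwichCoeff B C lam y b * lam b (star b) 1 := by
  -- with `τ = coord 1`: `τ (C⁺ y C⁺ b*) = conj τ (b C⁺ y* C⁺) = conj τ (C⁺ b C⁺ y*)`
  have trace_eq : ∀ {b y : A}, b ∈ B → y ∈ B →
      coord 1 ((∑ c ∈ C, c) * b * (∑ c ∈ C, c) * star y) =
        (sandwichCoeff B C lam b y * lam y (star y) 1 : ℝ) := fun hb hy => by
    rw [hA.coord_one_mul_star hcoord hy, hA.coord_sum_mul_mul_sum hcoord hC.2.1 hb hy,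
      Complex.ofReal_mul]
  have h := hA.coord_one_star hcoord ((∑ c ∈ C, c) * y * (∑ c ∈ C, c) * star b)
  simp only [star_mul, star_star, hC.star_sum hA hcoord] at h
  rw [← mul_assoc, ← mul_assoc, hA.coord_one_mul_comm hcoord, ← mul_assoc, ← mul_assoc,
    trace_eq hb hy, trace_eq hy hb, Complex.conj_ofReal] at h
  exact_mod_cast h

theorem sum_sandwichCoeff_mul_deg (hA : IsCAlgebra A B deg lam)
    (hcoord : ∀ x : A, x = ∑ b ∈ B, coord b x • b) (hC : IsClosedSubset B C coord) {b : A}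
    (hb : b ∈ B) :
    ∑ y ∈ B, sandwichCoeff B C lam b y * lam y (star y) 1 =
      (∑ c ∈ C, lam c (star c) 1) ^ 2 * lam b (star b) 1 := by
  have h := AlgHom.eq_sum_coord_mul hcoord deg ((∑ c ∈ C, c) * b * ∑ c ∈ C, c)
  rw [map_mul, map_mul, map_sum, hC.sum_deg_eq hA, hA.deg_eq hb] at h
  have hsum : ∑ y ∈ B, coord y ((∑ c ∈ C, c) * b * ∑ c ∈ C, c) * deg y =
      ((∑ y ∈ B, sandwichCoeff B C lam b y * lam y (star y) 1 : ℝ) : ℂ) := by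
    push_cast
    exact Finset.sum_congr rfl fun y hy => by
      rw [hA.coord_sum_mul_mul_sum hcoord hC.2.1 hb hy, hA.deg_eq hy]
  rw [hsum] at h
  rw [← Complex.ofReal_inj]
  push_cast at h ⊢
  linear_combination -h

theorem coord_sum_DCoset_mul_sum_DCoset (hA : IsCAlgebra A B deg lam)
    (hcoord : ∀ x : A, x = ∑ b ∈ B, coord b x • b) {i j t : A} (ht : t ∈ B) :
    coord t ((∑ x ∈ DCoset B coord C i, x) * ∑ x ∈ DCoset B coord C j, x) =
      ((∑ r ∈ DCoset B coord C i, ∑ s ∈ DCoset B coord C j, lam r s t : ℝ) : ℂ) := by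
  simp only [Finset.sum_mul_sum, hA.coord_sum hcoord ht, Complex.ofReal_sum]
  exact Finset.sum_congr rfl fun r hr => Finset.sum_congr rfl fun s hs =>
    hA.coord_mul hcoord (DCoset_subset B coord C i hr) (DCoset_subset B coord C j hs) ht

end IsCAlgebra

namespace IsTableAlgebra

theorem sandwichCoeff_nonneg (hT : IsTableAlgebra A B deg lam) (hCB : C ⊆ B) {b y : A}
    (hb : b ∈ B) (hy : y ∈ B) : 0 ≤ sandwichCoeff B C lam b y :=
  Finset.sum_nonneg fun c hc => Finset.sum_nonneg fun d hd => Finset.sum_nonneg fun u hu =>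
    mul_nonneg (hT.lam_nonneg c (hCB hc) b hb u hu) (hT.lam_nonneg u hu d (hCB hd) y hy)

theorem sandwichCoeff_self_pos (hT : IsTableAlgebra A B deg lam)
    (hcoord : ∀ x : A, x = ∑ b ∈ B, coord b x • b) (hC : IsClosedSubset B C coord) {b : A}
    (hb : b ∈ B) : 0 < sandwichCoeff B C lam b b := by
  have h1C := hC.one_mem hT.toIsCAlgebra hcoord
  have hlam : ∀ {a a'}, a ∈ B → a' ∈ B → a * a' = b → lam a a' b = 1 := fun ha ha' h => by
    have hcoeff := hT.coord_mul hcoord ha ha' hb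
    rw [h, hT.coord_of_mem hcoord hb hb, if_pos rfl] at hcoeff
    exact_mod_cast hcoeff.symm
  have hnn : ∀ c ∈ C, ∀ d ∈ C, ∀ u ∈ B, 0 ≤ lam c b u * lam u d b := fun c hc d hd u hu =>
    mul_nonneg (hT.lam_nonneg c (hC.2.1 hc) b hb u hu) (hT.lam_nonneg u hu d (hC.2.1 hd) b hb)
  calc (0 : ℝ) < lam 1 b b * lam b 1 b := by
          rw [hlam hT.one_mem hb (one_mul b), hlam hb hT.one_mem (mul_one b), one_mul]
          exact one_pos
    _ ≤ ∑ u ∈ B, lam 1 b u * lam u 1 b :=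
        Finset.single_le_sum (f := fun u => lam 1 b u * lam u 1 b) (hnn 1 h1C 1 h1C) hb
    _ ≤ ∑ d ∈ C, ∑ u ∈ B, lam 1 b u * lam u d b :=
        Finset.single_le_sum (f := fun d => ∑ u ∈ B, lam 1 b u * lam u d b)
          (fun d hd => Finset.sum_nonneg (hnn 1 h1C d hd)) h1C
    _ ≤ sandwichCoeff B C lam b b :=
        Finset.single_le_sum (f := fun c => ∑ d ∈ C, ∑ u ∈ B, lam c b u * lam u d b)
          (fun c hc => Finset.sum_nonneg fun d hd => Finset.sum_nonneg (hnn c hc d hd)) h1C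

theorem sandwichCoeff_self_ne_zero (hT : IsTableAlgebra A B deg lam)
    (hcoord : ∀ x : A, x = ∑ b ∈ B, coord b x • b) (hC : IsClosedSubset B C coord) {b : A}
    (hb : b ∈ B) : (sandwichCoeff B C lam b b : ℂ) ≠ 0 := by
  exact_mod_cast (hT.sandwichCoeff_self_pos hcoord hC hb).ne'

theorem eq_of_sandwichCoeff_ne_zero (hT : IsTableAlgebra A B deg lam)
    (hcoord : ∀ x : A, x = ∑ b ∈ B, coord b x • b) (hC : IsClosedSubset B C coord) {X : A}
    {f : A → ℝ} (hX : ∀ t ∈ B, coord t X = f t)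
    (hXC : (∑ c ∈ C, c) * X * (∑ c ∈ C, c) = (∑ c ∈ C, deg c) ^ 2 • X) {s t : A}
    (hs : s ∈ B) (ht : t ∈ B) (hst : sandwichCoeff B C lam s t ≠ 0) : f s = f t := by
  have harmonic : ∀ s ∈ B, ∑ t ∈ B, f t * sandwichCoeff B C lam t s =
      (∑ c ∈ C, lam c (star c) 1) ^ 2 * f s := fun s hs => by
    have h := congrArg (coord s) hXC
    rw [hT.coord_sum_mul_mul_sum_eq_sum_coord_mul hcoord hC.2.1 hs, hT.coord_smul hcoord hs,
      hX s hs,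
      hC.sum_deg_eq hT.toIsCAlgebra, Finset.sum_congr rfl fun t ht => by rw [hX t ht]] at h
    exact_mod_cast h
  refine Finset.eq_of_weighted_harmonic B
    (fun s t => sandwichCoeff B C lam s t * lam t (star t) 1) f
    (fun s hs t ht => mul_nonneg (hT.sandwichCoeff_nonneg hC.2.1 hs ht) (hT.deg_pos t ht).le)
    (fun s hs t ht => hT.sandwichCoeff_mul_deg_comm hcoord hC hs ht) (fun s hs => ?_) hs ht
    (mul_ne_zero hst (hT.deg_pos t ht).ne')
  calc ∑ t ∈ B, sandwichCoeff B C lam s t * lam t (star t) 1 * f t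
      = lam s (star s) 1 * ∑ t ∈ B, f t * sandwichCoeff B C lam t s := by
        rw [Finset.mul_sum]
        refine Finset.sum_congr rfl fun t ht => ?_
        rw [hT.sandwichCoeff_mul_deg_comm hcoord hC hs ht]
        ring
    _ = (∑ t ∈ B, sandwichCoeff B C lam s t * lam t (star t) 1) * f s := by
        rw [harmonic s hs, hT.sum_sandwichCoeff_mul_deg hcoord hC hs]
        ring

theorem sandwichCoeff_eq_of_ne_zero (hT : IsTableAlgebra A B deg lam)
    (hcoord : ∀ x : A, x = ∑ b ∈ B, coord b x • b) (hC : IsClosedSubset B C coord) {b y z : A}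
    (hb : b ∈ B) (hy : y ∈ B) (hz : z ∈ B) (hyz : sandwichCoeff B C lam y z ≠ 0) :
    sandwichCoeff B C lam b y = sandwichCoeff B C lam b z :=
  hT.eq_of_sandwichCoeff_ne_zero hcoord hC
    (fun _ ht => hT.coord_sum_mul_mul_sum hcoord hC.2.1 hb ht)
    (hC.sum_mul_mul_sum_sandwich hT.toIsCAlgebra hcoord b) hy hz hyz

theorem self_mem_DCoset (hT : IsTableAlgebra A B deg lam)
    (hcoord : ∀ x : A, x = ∑ b ∈ B, coord b x • b) (hC : IsClosedSubset B C coord) {b : A}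
    (hb : b ∈ B) : b ∈ DCoset B coord C b :=
  (hT.mem_DCoset_iff hcoord hC.2.1 hb).mpr ⟨hb, (hT.sandwichCoeff_self_pos hcoord hC hb).ne'⟩

theorem mem_DCoset_comm (hT : IsTableAlgebra A B deg lam)
    (hcoord : ∀ x : A, x = ∑ b ∈ B, coord b x • b) (hC : IsClosedSubset B C coord) {b y : A}
    (hb : b ∈ B) (hy : y ∈ DCoset B coord C b) : b ∈ DCoset B coord C y := by
  obtain ⟨hyB, hby⟩ := (hT.mem_DCoset_iff hcoord hC.2.1 hb).mp hy
  refine (hT.mem_DCoset_iff hcoord hC.2.1 hyB).mpr ⟨hb, fun hyb => hby ?_⟩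
  have h := hT.sandwichCoeff_mul_deg_comm hcoord hC hb hyB
  rw [hyb, zero_mul] at h
  exact (mul_eq_zero.mp h).resolve_right (hT.deg_pos y hyB).ne'

theorem mem_DCoset_trans (hT : IsTableAlgebra A B deg lam)
    (hcoord : ∀ x : A, x = ∑ b ∈ B, coord b x • b) (hC : IsClosedSubset B C coord) {b y z : A}
    (hb : b ∈ B) (hy : y ∈ DCoset B coord C b) (hz : z ∈ DCoset B coord C y) :
    z ∈ DCoset B coord C b := by
  obtain ⟨hyB, hby⟩ := (hT.mem_DCoset_iff hcoord hC.2.1 hb).mp hy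
  obtain ⟨hzB, hyz⟩ := (hT.mem_DCoset_iff hcoord hC.2.1 hyB).mp hz
  exact (hT.mem_DCoset_iff hcoord hC.2.1 hb).mpr
    ⟨hzB, hT.sandwichCoeff_eq_of_ne_zero hcoord hC hb hyB hzB hyz ▸ hby⟩

theorem DCoset_eq_of_mem (hT : IsTableAlgebra A B deg lam)
    (hcoord : ∀ x : A, x = ∑ b ∈ B, coord b x • b) (hC : IsClosedSubset B C coord) {b y : A}
    (hb : b ∈ B) (hy : y ∈ DCoset B coord C b) : DCoset B coord C y = DCoset B coord C b := by
  ext z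
  exact ⟨hT.mem_DCoset_trans hcoord hC hb hy,
    hT.mem_DCoset_trans hcoord hC (DCoset_subset B coord C b hy)
      (hT.mem_DCoset_comm hcoord hC hb hy)⟩

theorem sum_mul_mul_sum_eq_smul (hT : IsTableAlgebra A B deg lam)
    (hcoord : ∀ x : A, x = ∑ b ∈ B, coord b x • b) (hC : IsClosedSubset B C coord) {b : A}
    (hb : b ∈ B) :
    (∑ c ∈ C, c) * b * (∑ c ∈ C, c) =
      (sandwichCoeff B C lam b b : ℂ) • ∑ x ∈ DCoset B coord C b, x := by
  refine eq_of_coord_eq hcoord fun y hy => ?_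
  rw [hT.coord_sum_mul_mul_sum hcoord hC.2.1 hb hy, hT.coord_smul hcoord hy,
    hT.coord_sum_of_subset hcoord (DCoset_subset B coord C b) hy]
  split_ifs with hyb
  · rw [mul_one, hT.sandwichCoeff_eq_of_ne_zero hcoord hC hb hb hy
      ((hT.mem_DCoset_iff hcoord hC.2.1 hb).mp hyb).2]
  · rw [mul_zero, Complex.ofReal_eq_zero]
    by_contra hne
    exact hyb ((hT.mem_DCoset_iff hcoord hC.2.1 hb).mpr ⟨hy, hne⟩)

theorem sum_mul_sum_DCoset (hT : IsTableAlgebra A B deg lam)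
    (hcoord : ∀ x : A, x = ∑ b ∈ B, coord b x • b) (hC : IsClosedSubset B C coord) {b : A}
    (hb : b ∈ B) :
    (∑ c ∈ C, c) * (∑ x ∈ DCoset B coord C b, x) =
      (∑ c ∈ C, deg c) • ∑ x ∈ DCoset B coord C b, x := by
  refine smul_right_injective A (hT.sandwichCoeff_self_ne_zero hcoord hC hb) ?_
  dsimp only
  rw [← mul_smul_comm, ← hT.sum_mul_mul_sum_eq_smul hcoord hC hb, smul_comm,
    ← hT.sum_mul_mul_sum_eq_smul hcoord hC hb, ← mul_assoc, ← mul_assoc,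
    hC.sum_mul_sum hT.toIsCAlgebra hcoord, smul_mul_assoc, smul_mul_assoc]

theorem sum_DCoset_mul_sum (hT : IsTableAlgebra A B deg lam)
    (hcoord : ∀ x : A, x = ∑ b ∈ B, coord b x • b) (hC : IsClosedSubset B C coord) {b : A}
    (hb : b ∈ B) :
    (∑ x ∈ DCoset B coord C b, x) * (∑ c ∈ C, c) =
      (∑ c ∈ C, deg c) • ∑ x ∈ DCoset B coord C b, x := by
  refine smul_right_injective A (hT.sandwichCoeff_self_ne_zero hcoord hC hb) ?_
  dsimp only
  rw [← smul_mul_assoc, ← hT.sum_mul_mul_sum_eq_smul hcoord hC hb, smul_comm,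
    ← hT.sum_mul_mul_sum_eq_smul hcoord hC hb, mul_assoc,
    hC.sum_mul_sum hT.toIsCAlgebra hcoord, mul_smul_comm]

theorem DCoset_one (hT : IsTableAlgebra A B deg lam)
    (hcoord : ∀ x : A, x = ∑ b ∈ B, coord b x • b) (hC : IsClosedSubset B C coord) :
    DCoset B coord C 1 = C := by
  ext y
  simp only [DCoset, Finset.mem_filter, mul_one, hC.sum_mul_sum hT.toIsCAlgebra hcoord]
  refine ⟨fun ⟨hy, h⟩ => ?_, fun hy => ⟨hC.2.1 hy, ?_⟩⟩
  · rw [hT.coord_smul hcoord hy, hT.coord_sum_of_subset hcoord hC.2.1 hy] at h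
    by_contra hyC
    simp [hyC] at h
  · rw [hT.coord_smul hcoord (hC.2.1 hy), hT.coord_sum_of_subset hcoord hC.2.1 (hC.2.1 hy),
      if_pos hy, mul_one]
    exact hC.sum_deg_ne_zero hT.toIsCAlgebra

theorem star_sum_DCoset_mem_span (hT : IsTableAlgebra A B deg lam)
    (hcoord : ∀ x : A, x = ∑ b ∈ B, coord b x • b) (hC : IsClosedSubset B C coord) {b : A}
    (hb : b ∈ B) :
    star (∑ x ∈ DCoset B coord C b, x) ∈ ℂ ∙ ∑ x ∈ DCoset B coord C (star b), x := by
  have hstar : star ((∑ c ∈ C, c) * b * ∑ c ∈ C, c) = (∑ c ∈ C, c) * star b * ∑ c ∈ C, c := by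
    simp only [star_mul, hC.star_sum hT.toIsCAlgebra hcoord, mul_assoc]
  rw [hT.sum_mul_mul_sum_eq_smul hcoord hC hb,
    hT.sum_mul_mul_sum_eq_smul hcoord hC (hT.star_mem b hb), star_smul, Complex.star_def,
    Complex.conj_ofReal] at hstar
  rw [Submodule.mem_span_singleton]
  exact ⟨(sandwichCoeff B C lam b b : ℂ)⁻¹ * sandwichCoeff B C lam (star b) (star b), by
    rw [mul_smul, ← hstar, inv_smul_smul₀ (hT.sandwichCoeff_self_ne_zero hcoord hC hb)]⟩

theorem sum_lam_eq_of_mem_DCoset (hT : IsTableAlgebra A B deg lam)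
    (hcoord : ∀ x : A, x = ∑ b ∈ B, coord b x • b) (hC : IsClosedSubset B C coord) {i j k t : A}
    (hi : i ∈ B) (hj : j ∈ B) (hk : k ∈ B) (ht : t ∈ DCoset B coord C k) :
    ∑ r ∈ DCoset B coord C i, ∑ s ∈ DCoset B coord C j, lam r s t =
      ∑ r ∈ DCoset B coord C i, ∑ s ∈ DCoset B coord C j, lam r s k := by
  obtain ⟨htB, hkt⟩ := (hT.mem_DCoset_iff hcoord hC.2.1 hk).mp ht
  refine (hT.eq_of_sandwichCoeff_ne_zero hcoord hC
    (fun _ ht => hT.coord_sum_DCoset_mul_sum_DCoset hcoord ht) ?_ hk htB hkt).symm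
  rw [← mul_assoc, hT.sum_mul_sum_DCoset hcoord hC hi, smul_mul_assoc, smul_mul_assoc,
    mul_assoc, hT.sum_DCoset_mul_sum hcoord hC hj, mul_smul_comm, smul_smul, sq]

theorem sum_DCoset_mul_sum_DCoset (hT : IsTableAlgebra A B deg lam)
    (hcoord : ∀ x : A, x = ∑ b ∈ B, coord b x • b) (hC : IsClosedSubset B C coord) {T : Finset A}
    (hTB : T ⊆ B) (hreps : ∀ b ∈ B, ∃! t, t ∈ T ∧ b ∈ DCoset B coord C t) {i j : A}
    (hi : i ∈ B) (hj : j ∈ B) :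
    (∑ x ∈ DCoset B coord C i, x) * (∑ x ∈ DCoset B coord C j, x) =
      ∑ k ∈ T, ((∑ r ∈ DCoset B coord C i, ∑ s ∈ DCoset B coord C j, lam r s k : ℝ) : ℂ) •
        ∑ x ∈ DCoset B coord C k, x := by
  classical
  rw [hcoord ((∑ x ∈ DCoset B coord C i, x) * _),
    Finset.sum_eq_sum_sum_of_existsUnique (fun k _ => DCoset_subset B coord C k) hreps]
  refine Finset.sum_congr rfl fun k hk => ?_
  rw [Finset.smul_sum]
  refine Finset.sum_congr rfl fun t ht => ?_
  rw [hT.coord_sum_DCoset_mul_sum_DCoset hcoord (DCoset_subset B coord C k ht),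
    hT.sum_lam_eq_of_mem_DCoset hcoord hC hi hj (hTB hk) ht]

theorem linearIndependent_quo (hT : IsTableAlgebra A B deg lam)
    (hcoord : ∀ x : A, x = ∑ b ∈ B, coord b x • b) (hC : IsClosedSubset B C coord) {T : Finset A}
    (hTB : T ⊆ B) (hreps : ∀ b ∈ B, ∃! t, t ∈ T ∧ b ∈ DCoset B coord C t) :
    LinearIndependent ℂ (fun t : (T : Set A) => quo B deg coord C t) := by
  classical
  have hcoord_quo : ∀ {i t : A}, i ∈ T → t ∈ T →
      (∑ c ∈ C, deg c) * coord i (quo B deg coord C t) = if i = t then 1 else 0 := by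
    intro i t hi ht
    rw [quo, hT.coord_smul hcoord (hTB hi),
      hT.coord_sum_of_subset hcoord (DCoset_subset B coord C t) (hTB hi),
      mul_inv_cancel_left₀ (hC.sum_deg_ne_zero hT.toIsCAlgebra)]
    by_cases hit : i = t
    · rw [if_pos (hit ▸ hT.self_mem_DCoset hcoord hC (hTB hi)), if_pos hit]
    · rw [if_neg hit, if_neg fun hmem => hit ?_]
      obtain ⟨u, -, huniq⟩ := hreps i (hTB hi)
      exact (huniq i ⟨hi, hT.self_mem_DCoset hcoord hC (hTB hi)⟩).trans
        (huniq t ⟨ht, hmem⟩).symm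
  refine LinearIndependent.of_pairwise_dual_eq_zero_one _
    (fun i => (∑ c ∈ C, deg c) • hT.basis.coord ⟨i, hTB i.2⟩) (fun i t hit => ?_) fun i => ?_
  · simp [← hT.coord_eq_basis_coord hcoord, hcoord_quo i.2 t.2, Subtype.coe_injective.ne hit]
  · simp [← hT.coord_eq_basis_coord hcoord, hcoord_quo i.2 i.2]

theorem quo_one (hT : IsTableAlgebra A B deg lam)
    (hcoord : ∀ x : A, x = ∑ b ∈ B, coord b x • b) (hC : IsClosedSubset B C coord) :
    quo B deg coord C 1 = (∑ c ∈ C, deg c)⁻¹ • ∑ c ∈ C, c := by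
  rw [quo, hT.DCoset_one hcoord hC]

theorem inv_smul_sum_mul_quo (hT : IsTableAlgebra A B deg lam)
    (hcoord : ∀ x : A, x = ∑ b ∈ B, coord b x • b) (hC : IsClosedSubset B C coord) {b : A}
    (hb : b ∈ B) :
    ((∑ c ∈ C, deg c)⁻¹ • ∑ c ∈ C, c) * quo B deg coord C b = quo B deg coord C b ∧
      quo B deg coord C b * ((∑ c ∈ C, deg c)⁻¹ • ∑ c ∈ C, c) = quo B deg coord C b :=
  ⟨inv_smul_mul_inv_smul_of_mul_eq (hC.sum_deg_ne_zero hT.toIsCAlgebra)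
      (hT.sum_mul_sum_DCoset hcoord hC hb),
    inv_smul_mul_inv_smul_of_mul_eq (hC.sum_deg_ne_zero hT.toIsCAlgebra)
      (hT.sum_DCoset_mul_sum hcoord hC hb)⟩

theorem quo_mul_quo (hT : IsTableAlgebra A B deg lam)
    (hcoord : ∀ x : A, x = ∑ b ∈ B, coord b x • b) (hC : IsClosedSubset B C coord) {T : Finset A}
    (hTB : T ⊆ B) (hreps : ∀ b ∈ B, ∃! t, t ∈ T ∧ b ∈ DCoset B coord C t) {i j : A}
    (hi : i ∈ B) (hj : j ∈ B) :
    quo B deg coord C i * quo B deg coord C j =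
      ∑ k ∈ T, (((∑ c ∈ C, lam c (star c) 1)⁻¹ *
        ∑ r ∈ DCoset B coord C i, ∑ s ∈ DCoset B coord C j, lam r s k : ℝ) : ℂ) •
          quo B deg coord C k := by
  rw [quo, quo, smul_mul_smul_comm, hT.sum_DCoset_mul_sum_DCoset hcoord hC hTB hreps hi hj,
    Finset.smul_sum]
  refine Finset.sum_congr rfl fun k _ => ?_
  rw [quo, smul_smul, smul_smul, hC.sum_deg_eq hT.toIsCAlgebra]
  push_cast
  ring_nf

theorem star_quo_mem_span (hT : IsTableAlgebra A B deg lam)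
    (hcoord : ∀ x : A, x = ∑ b ∈ B, coord b x • b) (hC : IsClosedSubset B C coord) {T : Finset A}
    (hTB : T ⊆ B) (hreps : ∀ b ∈ B, ∃! t, t ∈ T ∧ b ∈ DCoset B coord C t) {t : A}
    (ht : t ∈ B) :
    star (quo B deg coord C t) ∈ Submodule.span ℂ {x | ∃ t ∈ T, x = quo B deg coord C t} := by
  obtain ⟨k, ⟨hk, htk⟩, -⟩ := hreps (star t) (hT.star_mem t ht)
  have hstar := hT.star_sum_DCoset_mem_span hcoord hC ht
  rw [hT.DCoset_eq_of_mem hcoord hC (hTB hk) htk] at hstar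
  have hk_mem : ∑ x ∈ DCoset B coord C k, x ∈
      Submodule.span ℂ {x | ∃ t ∈ T, x = quo B deg coord C t} := by
    rw [← smul_inv_smul₀ (hC.sum_deg_ne_zero hT.toIsCAlgebra) (∑ x ∈ DCoset B coord C k, x)]
    exact Submodule.smul_mem _ _ (Submodule.subset_span ⟨k, hk, rfl⟩)
  rw [quo, star_smul]
  exact Submodule.smul_mem _ _ ((Submodule.span_singleton_le_iff_mem _ _).mpr hk_mem hstar)

end IsTableAlgebra

end

/-- the quotient of a table algebra by a closed subset is a table algebra
with unit `e = |C⁺|⁻¹ C⁺`, basis `{bᵢ/C}` and structure constants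
`γ_{ijk} = |C⁺|⁻¹ ∑_{r ∈ C bᵢ C, s ∈ C bⱼ C} λ_{rst}` (independent of `t ∈ C bₖ C`). -/
theorem stmt5 {A : Type*} [Ring A] [Algebra ℂ A] [StarRing A] [StarModule ℂ A]
    (B : Finset A) (deg : A →ₐ[ℂ] ℂ) (lam : A → A → A → ℝ)
    (hTA : IsTableAlgebra A B deg lam)
    -- `coord b x` is the coefficient of the basis element `b ∈ B` in `x`
    (coord : A → A → ℂ) (hcoord : ∀ x : A, x = ∑ b ∈ B, coord b x • b)
    (C : Finset A) (hC : IsClosedSubset B C coord)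
    -- `T` is a complete set of representatives of the `C`-double cosets, with `1 ∈ T`
    (T : Finset A) (hTB : T ⊆ B) (h1T : (1 : A) ∈ T)
    (hreps : ∀ b ∈ B, ∃! t, t ∈ T ∧ b ∈ DCoset B coord C t)
    (e : A) (he : e = (∑ c ∈ C, deg c)⁻¹ • ∑ c ∈ C, c)
    (S : Submodule ℂ A) (hS : S = Submodule.span ℂ {x | ∃ t ∈ T, x = quo B deg coord C t}) :
    -- `e` is an idempotent lying in the span, and is a two-sided unit for it
    e * e = e ∧ e ∈ S ∧
    (∀ x ∈ S, e * x = x ∧ x * e = x) ∧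
    -- the span is closed under multiplication and under `star`
    (∀ x ∈ S, ∀ y ∈ S, x * y ∈ S) ∧
    (∀ t ∈ T, star (quo B deg coord C t) ∈ S) ∧
    -- the elements `bᵢ/C` are linearly independent (they form a basis of the span)
    LinearIndependent ℂ (fun t : ↥(T : Set A) => quo B deg coord C (t : A)) ∧
    -- nonnegative real structure constants, given by the double coset formula,
    -- whose value does not depend on the choice of `t ∈ C bₖ C`
    (∃ γ : A → A → A → ℝ,
      (∀ i ∈ T, ∀ j ∈ T, ∀ k ∈ T, 0 ≤ γ i j k) ∧
      (∀ i ∈ T, ∀ j ∈ T, ∀ k ∈ T, ∀ t ∈ DCoset B coord C k,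
        (γ i j k : ℂ) = (∑ c ∈ C, deg c)⁻¹ *
          ∑ r ∈ DCoset B coord C i, ∑ s ∈ DCoset B coord C j, (lam r s t : ℂ)) ∧
      (∀ i ∈ T, ∀ j ∈ T,
        quo B deg coord C i * quo B deg coord C j =
          ∑ k ∈ T, (γ i j k : ℂ) • quo B deg coord C k)) := by
  have hA := hTA.toIsCAlgebra
  subst he hS
  have hquo_mem : ∀ t ∈ T, quo B deg coord C t ∈
      Submodule.span ℂ {x | ∃ t ∈ T, x = quo B deg coord C t} := fun t ht =>
    Submodule.subset_span ⟨t, ht, rfl⟩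
  refine ⟨inv_smul_mul_inv_smul_of_mul_eq (hC.sum_deg_ne_zero hA) (hC.sum_mul_sum hA hcoord),
    hTA.quo_one hcoord hC ▸ hquo_mem 1 h1T, fun x hx => ?_, fun x hx y hy => ?_,
    fun t ht => hTA.star_quo_mem_span hcoord hC hTB hreps (hTB ht),
    hTA.linearIndependent_quo hcoord hC hTB hreps, ?_⟩
  · refine Submodule.mul_eq_self_of_mem_span ?_ hx
    rintro _ ⟨t, ht, rfl⟩
    exact hTA.inv_smul_sum_mul_quo hcoord hC (hTB ht)
  · refine Submodule.mul_mem_span_of_mul_mem ?_ hx hy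
    rintro _ ⟨i, hi, rfl⟩ _ ⟨j, hj, rfl⟩
    rw [hTA.quo_mul_quo hcoord hC hTB hreps (hTB hi) (hTB hj)]
    exact Submodule.sum_mem _ fun k hk => Submodule.smul_mem _ _ (hquo_mem k hk)
  refine ⟨fun i j k => (∑ c ∈ C, lam c (star c) 1)⁻¹ *
    ∑ r ∈ DCoset B coord C i, ∑ s ∈ DCoset B coord C j, lam r s k,
    fun i _ j _ k hk => ?_, fun i hi j hj k hk t ht => ?_,
    fun i hi j hj => hTA.quo_mul_quo hcoord hC hTB hreps (hTB hi) (hTB hj)⟩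
  · exact mul_nonneg (inv_nonneg.mpr (hC.sum_lam_pos hA).le)
      (Finset.sum_nonneg fun r hr => Finset.sum_nonneg fun s hs => hTA.lam_nonneg r
        (DCoset_subset B coord C i hr) s (DCoset_subset B coord C j hs) k (hTB hk))
  · beta_reduce
    rw [hC.sum_deg_eq hA,
      ← hTA.sum_lam_eq_of_mem_DCoset hcoord hC (hTB hi) (hTB hj) (hTB hk) ht]
    push_cast
    rfl
end

section
/- Let (A,B) be a table algebra satisfying the standard character condition, and let D : A → Mat_n(ℂ) be a representation affording ζ such that D(b*) = D(b)ᵀ for all b ∈ B and every D(b), b ∈ B, is a (0,1)-matrix. Then: each D(b) has exactly |b| entries equal to 1 in every row and in every column; for distinct b, c ∈ B the matrices D(b) and D(c) never have an entry 1 in the same position; and Σ_{b∈B} D(b) = J, the all-ones n×n matrix. In particular the ℂ-span of {D(b) : b ∈ B} contains I and J and is closed under matrix multiplication, the entrywise (Hadamard) product, and transpose, i.e., it is a cellular algebra. -/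
/-!
Since `D(b*) = D(b)ᵀ`, the Frobenius product of `D(a)` and `D(b)` is
`tr D(a b*) = ζ(a b*) = λ_{a b* 1} ζ(1)`, and `ζ(1) = n`. For `a ≠ b` this vanishes, and as
the entries are nonnegative the supports of `D(a)` and `D(b)` are disjoint. For `a = b` it says that
`D(b)` has `|b| n` ones. The `i`-th row sum of `D(b)` is `(D(b) D(b)ᵀ)_{ii} = D(b b*)_{ii}
= Σ_c λ_{b b* c} D(c)_{ii} ≥ λ_{b b* 1} = |b|` by nonnegativity of the structure constants, so
every row sum equals `|b|`. Hence `Σ_b D(b)` is a `(0,1)`-matrix whose rows sum to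
`Σ_b |b| = n`, i.e. it is `J`.

Since `B` spans `A`, the span of the `D(b)` is `D(A)`, which contains `I` and is closed under
products. The Hadamard product of two generators is `D(b)` or `0`, and `D(b)ᵀ = D(b*)`.
-/

open Matrix
open scoped BigOperators

open scoped ComplexOrder

namespace Submodule

variable {R M N P : Type*} [CommSemiring R] [AddCommMonoid M] [AddCommMonoid N]
  [AddCommMonoid P] [Module R M] [Module R N] [Module R P]

theorem apply_mem_of_mem_span₂ (f : M →ₗ[R] N →ₗ[R] P) {s : Set M} {t : Set N}
    {p : Submodule R P} (h : ∀ x ∈ s, ∀ y ∈ t, f x y ∈ p) {x : M} {y : N}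
    (hx : x ∈ span R s) (hy : y ∈ span R t) : f x y ∈ p :=
  map₂_le.mp ((map₂_span_span R f s t).trans_le (span_le.mpr (Set.image2_subset_iff.mpr h)))
    x hx y hy

end Submodule

namespace Matrix

variable {m n α : Type*}

def IsZeroOne [Zero α] [One α] (M : Matrix m n α) : Prop :=
  ∀ i j, M i j = 0 ∨ M i j = 1

def hadamardBilinear [CommSemiring α] :
    Matrix m n α →ₗ[α] Matrix m n α →ₗ[α] Matrix m n α :=
  LinearMap.mk₂ α hadamard (fun _ _ _ => add_hadamard _ _ _) (fun _ _ _ => smul_hadamard _ _ _)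
    (fun _ _ _ => hadamard_add _ _ _) (fun _ _ _ => hadamard_smul _ _ _)

@[simp]
theorem hadamardBilinear_apply [CommSemiring α] (M N : Matrix m n α) :
    hadamardBilinear M N = M ⊙ N :=
  rfl

theorem isZeroOne_iff_hadamard_self [MonoidWithZero α] [IsLeftCancelMulZero α]
    {M : Matrix m n α} : IsZeroOne M ↔ M ⊙ M = M := by
  simp only [hadamard_self_eq_self_iff, IsIdempotentElem.iff_eq_zero_or_one, IsZeroOne]

theorem eq_zero_of_nonneg_of_sum_sum_eq_zero [Fintype m] [Fintype n] [AddCommMonoid α]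
    [PartialOrder α] [IsOrderedAddMonoid α] {M : Matrix m n α} (hM : ∀ i j, 0 ≤ M i j)
    (h : ∑ i, ∑ j, M i j = 0) : M = 0 := by
  rw [Fintype.sum_eq_zero_iff_of_nonneg fun i => Fintype.sum_nonneg (hM i)] at h
  ext i j
  exact congr_fun ((Fintype.sum_eq_zero_iff_of_nonneg (hM i)).mp (congr_fun h i)) j

namespace IsZeroOne

variable {M : Matrix m n α}

theorem mul_self_apply [MulZeroOneClass α] (hM : IsZeroOne M) (i : m) (j : n) :
    M i j * M i j = M i j := by
  rcases hM i j with h | h <;> simp [h]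

theorem nonneg [Zero α] [One α] [Preorder α] [ZeroLEOneClass α] (hM : IsZeroOne M)
    (i : m) (j : n) : 0 ≤ M i j := by
  rcases hM i j with h | h <;> simp [h]

theorem le_one [Zero α] [One α] [Preorder α] [ZeroLEOneClass α] (hM : IsZeroOne M)
    (i : m) (j : n) : M i j ≤ 1 := by
  rcases hM i j with h | h <;> simp [h]

theorem sum [CommSemiring α] [IsLeftCancelMulZero α] {β : Type*} {s : Finset β}
    {M : β → Matrix m n α} (h : ∀ b ∈ s, IsZeroOne (M b))
    (hdisj : ∀ b ∈ s, ∀ c ∈ s, b ≠ c → M b ⊙ M c = 0) :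
    IsZeroOne (∑ b ∈ s, M b) := by
  rw [isZeroOne_iff_hadamard_self]
  calc (∑ b ∈ s, M b) ⊙ ∑ c ∈ s, M c = ∑ b ∈ s, ∑ c ∈ s, M b ⊙ M c := by
        simp only [← hadamardBilinear_apply, map_sum, LinearMap.sum_apply]
        exact Finset.sum_comm
    _ = ∑ b ∈ s, M b ⊙ M b := Finset.sum_congr rfl fun b hb =>
        Finset.sum_eq_single_of_mem b hb fun c hc hcb => hdisj b hb c hc (Ne.symm hcb)
    _ = ∑ b ∈ s, M b := Finset.sum_congr rfl fun b hb => isZeroOne_iff_hadamard_self.mp (h b hb)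

theorem mul_transpose_self_apply [Fintype n] [Semiring α] (hM : IsZeroOne M) (i : m) :
    (M * Mᵀ) i i = ∑ j, M i j := by
  simp only [mul_apply, transpose_apply, hM.mul_self_apply]

theorem eq_all_ones_of_sum_row_eq_card [Fintype n] [Semiring α] [PartialOrder α]
    [IsOrderedCancelAddMonoid α] [ZeroLEOneClass α] (hM : IsZeroOne M)
    (h : ∀ i, ∑ j, M i j = Fintype.card n) : M = of fun _ _ => 1 := by
  ext i j
  have hrow : ∑ j, M i j = ∑ _j : n, (1 : α) := by simp [h i]
  exact (Finset.sum_eq_sum_iff_of_le fun j _ => hM.le_one i j).mp hrow j (Finset.mem_univ j)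

end IsZeroOne

end Matrix

section Representation

variable {A : Type*} [Ring A] [Algebra ℂ A] [StarRing A] [StarModule ℂ A]
  {B : Finset A} {deg : A →ₐ[ℂ] ℂ} {lam : A → A → A → ℝ} {ζ : A →ₗ[ℂ] ℂ}
  {ι : Type*} [Fintype ι] [DecidableEq ι] {D : A →ₐ[ℂ] Matrix ι ι ℂ}

namespace IsCAlgebra

theorem deg_star_eq (hC : IsCAlgebra A B deg lam) {b : A} (hb : b ∈ B) :
    deg (star b) = deg b := by
  rw [hC.deg_star, ← hC.lam_one_eq b hb, Complex.conj_ofReal]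

theorem stdTrace_mul (hC : IsCAlgebra A B deg lam) (hζ : IsStdTrace B deg ζ) {a b : A}
    (ha : a ∈ B) (hb : b ∈ B) : ζ (a * b) = lam a b 1 * ζ 1 := by
  rw [hC.struct a ha b hb, map_sum, Finset.sum_eq_single_of_mem 1 hC.one_mem fun c hc hc1 => by
    rw [map_smul, hζ.2 c hc hc1, smul_zero], map_smul, smul_eq_mul]

theorem sum_hadamard_map_eq (hC : IsCAlgebra A B deg lam) (hζ : IsStdTrace B deg ζ)
    (hD : ∀ x, (D x).trace = ζ x) (hstar : ∀ b ∈ B, D (star b) = (D b)ᵀ) {a b : A}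
    (ha : a ∈ B) (hb : b ∈ B) : ∑ i, ∑ j, (D a ⊙ D b) i j = lam a (star b) 1 * ζ 1 := by
  rw [sum_hadamard_eq, ← hstar b hb, ← map_mul, hD, hC.stdTrace_mul hζ ha (hC.star_mem b hb)]

theorem hadamard_map_eq_zero (hC : IsCAlgebra A B deg lam) (hζ : IsStdTrace B deg ζ)
    (hD : ∀ x, (D x).trace = ζ x) (hstar : ∀ b ∈ B, D (star b) = (D b)ᵀ)
    (h01 : ∀ b ∈ B, IsZeroOne (D b)) {a b : A} (ha : a ∈ B) (hb : b ∈ B) (hab : a ≠ b) :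
    D a ⊙ D b = 0 := by
  refine eq_zero_of_nonneg_of_sum_sum_eq_zero
    (fun i j => mul_nonneg ((h01 a ha).nonneg i j) ((h01 b hb).nonneg i j)) ?_
  rw [hC.sum_hadamard_map_eq hζ hD hstar ha hb,
    hC.lam_one_ne a ha _ (hC.star_mem b hb) (by rwa [star_star]), Complex.ofReal_zero, zero_mul]

theorem span_image_eq_range (hC : IsCAlgebra A B deg lam) :
    Submodule.span ℂ (D '' B) = LinearMap.range D.toLinearMap := by
  rw [← D.coe_toLinearMap, Submodule.span_image, hC.span_top, Submodule.map_top]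

theorem transpose_mem_span_image (hC : IsCAlgebra A B deg lam)
    (hstar : ∀ b ∈ B, D (star b) = (D b)ᵀ) {x : Matrix ι ι ℂ}
    (hx : x ∈ Submodule.span ℂ (D '' B)) : xᵀ ∈ Submodule.span ℂ (D '' B) := by
  refine Submodule.span_le (p := (Submodule.span ℂ (D '' B)).comap
    (transposeLinearEquiv ι ι ℂ ℂ).toLinearMap) |>.mpr ?_ hx
  rintro _ ⟨b, hb, rfl⟩
  show (D b)ᵀ ∈ Submodule.span ℂ (D '' B)
  exact hstar b hb ▸ Submodule.subset_span ⟨star b, hC.star_mem b hb, rfl⟩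

theorem hadamard_mem_span_image (hC : IsCAlgebra A B deg lam) (hζ : IsStdTrace B deg ζ)
    (hD : ∀ x, (D x).trace = ζ x) (hstar : ∀ b ∈ B, D (star b) = (D b)ᵀ)
    (h01 : ∀ b ∈ B, IsZeroOne (D b)) {x y : Matrix ι ι ℂ}
    (hx : x ∈ Submodule.span ℂ (D '' B)) (hy : y ∈ Submodule.span ℂ (D '' B)) :
    x ⊙ y ∈ Submodule.span ℂ (D '' B) := by
  refine Submodule.apply_mem_of_mem_span₂ hadamardBilinear ?_ hx hy
  rintro _ ⟨b, hb, rfl⟩ _ ⟨c, hc, rfl⟩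
  obtain rfl | hbc := eq_or_ne b c
  · rw [hadamardBilinear_apply, isZeroOne_iff_hadamard_self.mp (h01 b hb)]
    exact Submodule.subset_span ⟨b, hb, rfl⟩
  · rw [hadamardBilinear_apply, hC.hadamard_map_eq_zero hζ hD hstar h01 hb hc hbc]
    exact Submodule.zero_mem _

end IsCAlgebra

namespace IsTableAlgebra

theorem deg_le_diag_map_mul_star (hT : IsTableAlgebra A B deg lam)
    (h01 : ∀ b ∈ B, IsZeroOne (D b)) {b : A} (hb : b ∈ B) (i : ι) :
    deg b ≤ D (b * star b) i i := by
  have hterm : ∀ c ∈ B, 0 ≤ D ((lam b (star b) c : ℂ) • c) i i := fun c hc => by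
    rw [map_smul, Matrix.smul_apply, smul_eq_mul]
    exact mul_nonneg (Complex.zero_le_real.mpr (hT.lam_nonneg b hb _ (hT.star_mem b hb) c hc))
      ((h01 c hc).nonneg i i)
  have hone : D ((lam b (star b) 1 : ℂ) • 1) i i = deg b := by
    rw [map_smul, map_one, Matrix.smul_apply, one_apply_eq, smul_eq_mul, mul_one,
      hT.lam_one_eq b hb]
  rw [hT.struct b hb _ (hT.star_mem b hb), map_sum, Matrix.sum_apply, ← hone]
  exact Finset.single_le_sum hterm hT.one_mem

theorem sum_row_eq_deg (hT : IsTableAlgebra A B deg lam) (hζ : IsStdTrace B deg ζ)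
    (hD : ∀ x, (D x).trace = ζ x) (hstar : ∀ b ∈ B, D (star b) = (D b)ᵀ)
    (h01 : ∀ b ∈ B, IsZeroOne (D b)) {b : A} (hb : b ∈ B) (i : ι) :
    ∑ j, D b i j = deg b := by
  have hle : ∀ i ∈ Finset.univ, deg b ≤ ∑ j, D b i j := fun i _ => by
    have hdiag := hT.deg_le_diag_map_mul_star h01 hb i
    rwa [map_mul, hstar b hb, (h01 b hb).mul_transpose_self_apply] at hdiag
  have htotal : ∑ _i : ι, deg b = ∑ i, ∑ j, D b i j := by
    rw [← isZeroOne_iff_hadamard_self.mp (h01 b hb), hT.sum_hadamard_map_eq hζ hD hstar hb hb,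
      hT.lam_one_eq b hb, ← hD, map_one, trace_one, Finset.sum_const, Finset.card_univ,
      nsmul_eq_mul, mul_comm]
  exact ((Finset.sum_eq_sum_iff_of_le hle).mp htotal i (Finset.mem_univ i)).symm

theorem sum_col_eq_deg (hT : IsTableAlgebra A B deg lam) (hζ : IsStdTrace B deg ζ)
    (hD : ∀ x, (D x).trace = ζ x) (hstar : ∀ b ∈ B, D (star b) = (D b)ᵀ)
    (h01 : ∀ b ∈ B, IsZeroOne (D b)) {b : A} (hb : b ∈ B) (j : ι) :
    ∑ i, D b i j = deg b := by
  rw [← hT.deg_star_eq hb, ← hT.sum_row_eq_deg hζ hD hstar h01 (hT.star_mem b hb) j,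
    hstar b hb]
  rfl

theorem sum_map_eq_all_ones (hT : IsTableAlgebra A B deg lam) (hζ : IsStdTrace B deg ζ)
    (hD : ∀ x, (D x).trace = ζ x) (hstar : ∀ b ∈ B, D (star b) = (D b)ᵀ)
    (h01 : ∀ b ∈ B, IsZeroOne (D b)) : ∑ b ∈ B, D b = of fun _ _ => 1 := by
  refine (IsZeroOne.sum h01 fun b hb c hc => hT.hadamard_map_eq_zero hζ hD hstar h01 hb hc)
    |>.eq_all_ones_of_sum_row_eq_card fun i => ?_
  simp only [Matrix.sum_apply]
  rw [Finset.sum_comm, Finset.sum_congr rfl fun b hb => hT.sum_row_eq_deg hζ hD hstar h01 hb i,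
    ← hζ.1, ← hD, map_one, trace_one]

end IsTableAlgebra

end Representation

/-- if `D` affords the standard character `ζ`, `D(b*) = D(b)ᵀ` and every
`D(b)` is a `(0,1)`-matrix, then each `D(b)` has exactly `|b|` ones in every row and
column, the `D(b)` are pairwise disjoint, `∑_b D(b) = J`, and the span of `{D(b)}` is a
cellular algebra (contains `I` and `J`, and is closed under multiplication, Hadamard
product and transpose). -/
theorem stmt16 {A : Type*} [Ring A] [Algebra ℂ A] [StarRing A] [StarModule ℂ A]
    (B : Finset A) (deg : A →ₐ[ℂ] ℂ) (lam : A → A → A → ℝ)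
    (hTA : IsTableAlgebra A B deg lam)
    (ζ : A →ₗ[ℂ] ℂ) (hζ : IsStdTrace B deg ζ)
    (n : ℕ) (D : A →ₐ[ℂ] Matrix (Fin n) (Fin n) ℂ)
    (hD : ∀ x : A, (D x).trace = ζ x)
    (hstar : ∀ b ∈ B, D (star b) = (D b)ᵀ)
    (h01 : ∀ b ∈ B, ∀ i j, D b i j = 0 ∨ D b i j = 1)
    (S : Submodule ℂ (Matrix (Fin n) (Fin n) ℂ))
    (hS : S = Submodule.span ℂ (⇑D '' (B : Set A))) :
    -- each `D b` has exactly `|b| = deg b` ones in every row and in every column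
    (∀ b ∈ B, (∀ i, ∑ j, D b i j = deg b) ∧ (∀ j, ∑ i, D b i j = deg b)) ∧
    -- the matrices `D b`, `b ∈ B`, are pairwise disjoint
    (∀ b ∈ B, ∀ c ∈ B, b ≠ c → ∀ i j, ¬(D b i j = 1 ∧ D c i j = 1)) ∧
    -- their sum is the all-ones matrix `J`
    (∑ b ∈ B, D b) = Matrix.of (fun _ _ => (1 : ℂ)) ∧
    -- the span of `{D b : b ∈ B}` is a cellular algebra
    (1 : Matrix (Fin n) (Fin n) ℂ) ∈ S ∧
    Matrix.of (fun _ _ => (1 : ℂ)) ∈ S ∧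
    (∀ x ∈ S, ∀ y ∈ S, x * y ∈ S) ∧
    (∀ x ∈ S, ∀ y ∈ S, Matrix.hadamard x y ∈ S) ∧
    (∀ x ∈ S, xᵀ ∈ S) := by
  subst hS
  have hJ := hTA.sum_map_eq_all_ones hζ hD hstar h01
  refine ⟨fun b hb => ⟨hTA.sum_row_eq_deg hζ hD hstar h01 hb,
      hTA.sum_col_eq_deg hζ hD hstar h01 hb⟩,
    fun b hb c hc hbc i j ⟨hbij, hcij⟩ => ?_, hJ, ?_, ?_, ?_,
    fun x hx y hy => hTA.hadamard_mem_span_image hζ hD hstar h01 hx hy,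
    fun x hx => hTA.transpose_mem_span_image hstar hx⟩
  · simpa [hbij, hcij] using congr_fun₂ (hTA.hadamard_map_eq_zero hζ hD hstar h01 hb hc hbc) i j
  · rw [hTA.span_image_eq_range]
    exact ⟨1, map_one D⟩
  · rw [← hJ]
    exact Submodule.sum_mem _ fun b hb => Submodule.subset_span ⟨b, hb, rfl⟩
  · rw [hTA.span_image_eq_range]
    rintro _ ⟨x, rfl⟩ _ ⟨y, rfl⟩
    exact ⟨x * y, map_mul D x y⟩
end
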